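/- For the Werner-Holevo channel W_{d,λ}, the communication value is cv(W_{d,λ}) = d(d+1−2λ)/(d²−1) when λ ≤ (1+d)/(2d), and cv(W_{d,λ}) = 2dλ/(1+d) when λ > (1+d)/(2d). -/

import Mathlib

open scoped BigOperators Kronecker ComplexOrder
open Matrix

noncomputable section

/-- A density operator: positive semidefinite with unit trace. -/
def IsDensity {ι : Type*} [Fintype ι] (ρ : Matrix ι ι ℂ) : Prop :=
  ρ.PosSemidef ∧ ρ.trace = 1

/-- A separable bipartite positive operator: a nonnegative combination of
tensor products of positive operators. -/
def IsSep {ιA ιB : Type*} [Fintype ιA] [Fintype ιB]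
    (Ω : Matrix (ιA × ιB) (ιA × ιB) ℂ) : Prop :=
  ∃ (n : ℕ) (a : Fin n → Matrix ιA ιA ℂ) (b : Fin n → Matrix ιB ιB ℂ),
    (∀ i, (a i).PosSemidef) ∧ (∀ i, (b i).PosSemidef) ∧
      Ω = ∑ i, a i ⊗ₖ b i

/-- Partial trace over the first (A) system. -/
def ptraceA {ιA ιB : Type*} [Fintype ιA]
    (Ω : Matrix (ιA × ιB) (ιA × ιB) ℂ) : Matrix ιB ιB ℂ :=
  Matrix.of fun k l => ∑ i, Ω (i, k) (i, l)

/-- The Choi matrix of a linear map on matrices. -/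
def choi {ιA ιB : Type*} [Fintype ιA] [DecidableEq ιA]
    (Φ : Matrix ιA ιA ℂ →ₗ[ℂ] Matrix ιB ιB ℂ) :
    Matrix (ιA × ιB) (ιA × ιB) ℂ :=
  Matrix.of fun p q => Φ (Matrix.single p.1 q.1 1) p.2 q.2

/-- A quantum channel: a completely positive (Choi matrix PSD) trace-preserving
linear map. -/
structure Channel (ιA ιB : Type*) [Fintype ιA] [DecidableEq ιA] [Fintype ιB] where
  map : Matrix ιA ιA ℂ →ₗ[ℂ] Matrix ιB ιB ℂ
  cp : (choi map).PosSemidef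
  tp : ∀ X, (map X).trace = X.trace

/-- The communication value, via the conic program over the separable cone:
`cv(N) = max { Tr[Ω J_N] : Ω separable, Tr_A Ω = I }`. -/
def cv {ιA ιB : Type*} [Fintype ιA] [DecidableEq ιA] [Fintype ιB] [DecidableEq ιB]
    (N : Channel ιA ιB) : ℝ :=
  sSup {r | ∃ Ω : Matrix (ιA × ιB) (ιA × ιB) ℂ,
    IsSep Ω ∧ ptraceA Ω = 1 ∧ r = ((Ω * choi N.map).trace).re}

/-- The operational communication value: supremum over finite families of input
states and POVMs of `∑_x Tr[Π_x N(ρ_x)]`. -/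
def cvOp {ιA ιB : Type*} [Fintype ιA] [DecidableEq ιA] [Fintype ιB] [DecidableEq ιB]
    (N : Channel ιA ιB) : ℝ :=
  sSup {r | ∃ (n : ℕ) (ρ : Fin n → Matrix ιA ιA ℂ) (E : Fin n → Matrix ιB ιB ℂ),
    (∀ x, IsDensity (ρ x)) ∧ (∀ x, (E x).PosSemidef) ∧ (∑ x, E x) = 1 ∧
      r = (∑ x, (E x * N.map (ρ x)).trace).re}

/-- Maximal overlap of a bipartite operator with product unit vectors
(`Λ²`, exponential of minus the geometric measure of entanglement). -/
def lam2 {ιA ιB : Type*} [Fintype ιA] [Fintype ιB]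
    (ω : Matrix (ιA × ιB) (ιA × ιB) ℂ) : ℝ :=
  sSup {r | ∃ (a : ιA → ℂ) (b : ιB → ℂ),
    (∑ i, ‖a i‖ ^ 2) = 1 ∧ (∑ k, ‖b k‖ ^ 2) = 1 ∧
      r = (star (fun p : ιA × ιB => a p.1 * b p.2) ⬝ᵥ
        ω *ᵥ fun p : ιA × ιB => a p.1 * b p.2).re}

end

/-! The Choi matrix of `W_{d,λ}` is `a • 1 + b • F`, with `F` the flip of `ℂ^d ⊗ ℂ^d`,
`a = λ/(d+1) + (1-λ)/(d-1)` and `b = λ/(d+1) - (1-λ)/(d-1)`. A feasible `Ω = ∑ aᵢ ⊗ bᵢ` has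
`Tr Ω = Tr (Tr_A Ω) = d`, and `Tr (Ω F) = ∑ Tr (aᵢ bᵢ)` lies in `[0, d]` because
`0 ≤ Tr (A B) ≤ Tr A * Tr B` for positive `A`, `B`. So the objective `a d + b Tr (Ω F)` is at most
`a d + max b 0 * d`, and both ends are attained by the classical correlations
`∑ᵢ |i⟩⟨i| ⊗ |σ i⟩⟨σ i|`, with `σ` the identity or a cyclic shift. -/

namespace Matrix

section PosSemidef

variable {m n 𝕜 : Type*} [Fintype m] [Fintype n] [RCLike 𝕜]

open scoped Matrix.Norms.Frobenius in
theorem trace_conjTranspose_mul_self_eq_frobenius_norm_sq (C : Matrix m n 𝕜) :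
    (Cᴴ * C).trace = ((‖C‖ ^ 2 : ℝ) : 𝕜) := by
  rw [frobenius_norm_def, ← Real.sqrt_eq_rpow, Real.sq_sqrt (by positivity)]
  simp only [trace, diag, mul_apply, conjTranspose_apply, RCLike.star_def, RCLike.conj_mul,
    Real.rpow_two]
  push_cast
  exact Finset.sum_comm

theorem PosSemidef.exists_eq_conjTranspose_mul_self {A : Matrix n n 𝕜} (hA : A.PosSemidef) :
    ∃ C : Matrix n n 𝕜, A = Cᴴ * C := by
  classical
  open scoped MatrixOrder in exact CStarAlgebra.nonneg_iff_eq_star_mul_self.mp hA.nonneg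

open scoped Matrix.Norms.Frobenius in
/-- Writing `A = Cᴴ C` and `B = Mᴴ M`, `Tr (A B) = ‖M Cᴴ‖²`, and the Frobenius norm is
submultiplicative. -/
theorem PosSemidef.trace_mul_mem_Icc {A B : Matrix n n 𝕜} (hA : A.PosSemidef)
    (hB : B.PosSemidef) : (A * B).trace ∈ Set.Icc 0 (A.trace * B.trace) := by
  obtain ⟨C, rfl⟩ := hA.exists_eq_conjTranspose_mul_self
  obtain ⟨M, rfl⟩ := hB.exists_eq_conjTranspose_mul_self
  have hcycle : (Cᴴ * C * (Mᴴ * M)).trace = ((M * Cᴴ)ᴴ * (M * Cᴴ)).trace := by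
    rw [conjTranspose_mul, conjTranspose_conjTranspose, ← trace_mul_cycle]
    simp only [Matrix.mul_assoc]
  simp only [hcycle, trace_conjTranspose_mul_self_eq_frobenius_norm_sq, ← RCLike.ofReal_mul,
    Set.mem_Icc, RCLike.ofReal_nonneg, RCLike.ofReal_le_ofReal]
  refine ⟨by positivity, ?_⟩
  rw [← mul_pow, ← frobenius_norm_conjTranspose C, mul_comm ‖Cᴴ‖]
  exact pow_le_pow_left₀ (norm_nonneg _) (frobenius_norm_mul _ _) 2

end PosSemidef

theorem posSemidef_single_self {n R : Type*} [Ring R] [PartialOrder R] [StarRing R]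
    [StarOrderedRing R] [DecidableEq n] (i : n) {r : R} (hr : 0 ≤ r) :
    (single i i r).PosSemidef := by
  rw [← diagonal_single]
  exact .diagonal (Pi.single_nonneg.2 hr)

def swapMatrix (ι R : Type*) [DecidableEq ι] [Zero R] [One R] : Matrix (ι × ι) (ι × ι) R :=
  of fun p q => if p.swap = q then 1 else 0

section Swap

variable {ι R : Type*} [DecidableEq ι] [Fintype ι]

theorem trace_mul_swapMatrix [NonAssocSemiring R] (Ω : Matrix (ι × ι) (ι × ι) R) :
    (Ω * swapMatrix ι R).trace = ∑ p, Ω p p.swap := by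
  simp [trace, mul_apply, swapMatrix, Prod.swap_eq_iff_eq_swap]

theorem trace_kronecker_mul_swapMatrix [CommSemiring R] (a b : Matrix ι ι R) :
    (a ⊗ₖ b * swapMatrix ι R).trace = (a * b).trace := by
  rw [trace_mul_swapMatrix]
  simp [Fintype.sum_prod_type, trace, mul_apply]

end Swap

end Matrix

open Matrix
open scoped Finset

section PartialTrace

variable {ιA ιB : Type*} [Fintype ιA]

theorem trace_ptraceA [Fintype ιB] (Ω : Matrix (ιA × ιB) (ιA × ιB) ℂ) :
    (ptraceA Ω).trace = Ω.trace := by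
  simp only [trace, diag, ptraceA, of_apply, Fintype.sum_prod_type]
  exact Finset.sum_comm

theorem ptraceA_sum {κ : Type*} (s : Finset κ) (Ω : κ → Matrix (ιA × ιB) (ιA × ιB) ℂ) :
    ptraceA (∑ k ∈ s, Ω k) = ∑ k ∈ s, ptraceA (Ω k) := by
  ext
  simp only [ptraceA, of_apply, Matrix.sum_apply]
  exact Finset.sum_comm

theorem ptraceA_kronecker (a : Matrix ιA ιA ℂ) (b : Matrix ιB ιB ℂ) :
    ptraceA (a ⊗ₖ b) = a.trace • b := by
  ext
  simp [ptraceA, trace, Finset.sum_mul]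

end PartialTrace

section Separable

variable {ι : Type*} [Fintype ι]

theorem isSep_sum_kronecker {ιB κ : Type*} [Fintype ιB] [Fintype κ] {a : κ → Matrix ι ι ℂ}
    {b : κ → Matrix ιB ιB ℂ} (ha : ∀ k, (a k).PosSemidef) (hb : ∀ k, (b k).PosSemidef) :
    IsSep (∑ k, a k ⊗ₖ b k) := by
  let e := Fintype.equivFin κ
  exact ⟨_, a ∘ e.symm, b ∘ e.symm, fun i => ha _, fun i => hb _,
    (e.symm.sum_comp fun k => a k ⊗ₖ b k).symm⟩

variable [DecidableEq ι]

theorem IsSep.trace_mul_swapMatrix_mem_Icc {Ω : Matrix (ι × ι) (ι × ι) ℂ} (hΩ : IsSep Ω) :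
    (Ω * swapMatrix ι ℂ).trace ∈ Set.Icc 0 Ω.trace := by
  obtain ⟨n, a, b, ha, hb, rfl⟩ := hΩ
  simp only [Finset.sum_mul, trace_sum, trace_kronecker_mul_swapMatrix, trace_kronecker]
  exact ⟨Finset.sum_nonneg fun i _ => ((ha i).trace_mul_mem_Icc (hb i)).1,
    Finset.sum_le_sum fun i _ => ((ha i).trace_mul_mem_Icc (hb i)).2⟩

def permCorrelation (σ : Equiv.Perm ι) : Matrix (ι × ι) (ι × ι) ℂ :=
  ∑ i, single i i 1 ⊗ₖ single (σ i) (σ i) 1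

theorem isSep_permCorrelation (σ : Equiv.Perm ι) : IsSep (permCorrelation σ) :=
  isSep_sum_kronecker (fun i => posSemidef_single_self i zero_le_one)
    (fun i => posSemidef_single_self (σ i) zero_le_one)

theorem ptraceA_permCorrelation (σ : Equiv.Perm ι) : ptraceA (permCorrelation σ) = 1 := by
  simp only [permCorrelation, ptraceA_sum, ptraceA_kronecker, trace_single_eq_same, one_smul]
  rw [Equiv.sum_comp σ fun i => single i i (1 : ℂ), sum_single_one]

theorem trace_permCorrelation_mul_swapMatrix (σ : Equiv.Perm ι) :
    (permCorrelation σ * swapMatrix ι ℂ).trace = #{i | σ i = i} := by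
  simp only [permCorrelation, Finset.sum_mul, trace_sum, trace_kronecker_mul_swapMatrix,
    Finset.natCast_card_filter]
  refine Finset.sum_congr rfl fun i _ => ?_
  by_cases h : σ i = i
  · simp [h]
  · simp [h, single_mul_single_of_ne _ _ _ _ (Ne.symm h)]

end Separable

section CommunicationValue

variable {ι : Type*} [Fintype ι] [DecidableEq ι]

theorem choi_eq_smul_one_add_smul_swapMatrix (Φ : Matrix ι ι ℂ →ₗ[ℂ] Matrix ι ι ℂ) (a b : ℂ)
    (hΦ : ∀ X, Φ X = a • X.trace • (1 : Matrix ι ι ℂ) + b • Xᵀ) :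
    choi Φ = a • 1 + b • swapMatrix ι ℂ := by
  ext ⟨i, k⟩ ⟨j, l⟩
  obtain rfl | hij := eq_or_ne i j
  · simp [choi, hΦ, swapMatrix, one_apply, single_apply]
    grind
  · simp [choi, hΦ, swapMatrix, one_apply, single_apply, trace_single_eq_of_ne _ _ _ hij, hij]
    grind

theorem trace_mul_smul_one_add_smul_swapMatrix {Ω : Matrix (ι × ι) (ι × ι) ℂ}
    (hΩ : ptraceA Ω = 1) (a b : ℂ) :
    (Ω * (a • 1 + b • swapMatrix ι ℂ)).trace
      = a * Fintype.card ι + b * (Ω * swapMatrix ι ℂ).trace := by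
  rw [Matrix.mul_add, Matrix.mul_smul, Matrix.mul_smul, Matrix.mul_one, trace_add, trace_smul,
    trace_smul, ← trace_ptraceA Ω, hΩ, trace_one, smul_eq_mul, smul_eq_mul]

theorem cv_eq_of_choi_eq_smul_one_add_smul_swapMatrix {d : ℕ} (hd : 2 ≤ d)
    (N : Channel (Fin d) (Fin d)) (a b : ℝ)
    (hJ : choi N.map = (a : ℂ) • 1 + (b : ℂ) • swapMatrix (Fin d) ℂ) :
    cv N = a * d + max b 0 * d := by
  have objective : ∀ Ω, ptraceA Ω = 1 →
      ((Ω * choi N.map).trace).re = a * d + b * ((Ω * swapMatrix _ ℂ).trace).re := by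
    intro Ω hΩ
    rw [hJ, trace_mul_smul_one_add_smul_swapMatrix hΩ]
    simp
  refine IsGreatest.csSup_eq ⟨?_, ?_⟩
  · obtain ⟨σ, hσ⟩ : ∃ σ : Equiv.Perm (Fin d), b * #{i | σ i = i} = max b 0 * d := by
      rcases le_total b 0 with hb | hb
      · have hrot : ∀ i, finRotate d i ≠ i := fun i =>
          Equiv.Perm.mem_support.1 (support_finRotate_of_le hd ▸ Finset.mem_univ i)
        refine ⟨finRotate d, ?_⟩
        rw [Finset.card_eq_zero.2 (Finset.filter_eq_empty_iff.2 fun i _ => hrot i)]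
        simp [max_eq_right hb]
      · exact ⟨1, by simp [max_eq_left hb]⟩
    refine ⟨permCorrelation σ, isSep_permCorrelation σ, ptraceA_permCorrelation σ, ?_⟩
    rw [objective _ (ptraceA_permCorrelation σ), trace_permCorrelation_mul_swapMatrix, ← hσ]
    simp
  · rintro r ⟨Ω, hsep, hpt, rfl⟩
    obtain ⟨h0, h1⟩ := hsep.trace_mul_swapMatrix_mem_Icc
    rw [← trace_ptraceA Ω, hpt, trace_one] at h1
    have h0' := (Complex.le_def.1 h0).1
    have h1' := (Complex.le_def.1 h1).1
    simp only [Complex.zero_re, Complex.natCast_re, Fintype.card_fin] at h0' h1'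
    rw [objective Ω hpt]
    nlinarith [le_max_left b 0, le_max_right b 0]

end CommunicationValue

theorem cv_werner_holevo_general (d : ℕ) (hd : 2 ≤ d) (lam : ℝ)
    (N : Channel (Fin d) (Fin d))
    (hN : ∀ X : Matrix (Fin d) (Fin d) ℂ,
      N.map X = ((lam : ℂ) / ((d : ℂ) + 1)) • (X.trace • (1 : Matrix (Fin d) (Fin d) ℂ) + Xᵀ)
        + (((1 - lam : ℝ) : ℂ) / ((d : ℂ) - 1)) •
            (X.trace • (1 : Matrix (Fin d) (Fin d) ℂ) - Xᵀ)) :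
    (lam ≤ (1 + d) / (2 * d) →
      cv N = d * (d + 1 - 2 * lam) / ((d : ℝ) ^ 2 - 1)) ∧
    ((1 + d) / (2 * d) < lam →
      cv N = 2 * d * lam / (1 + d)) := by
  have hd' : (2 : ℝ) ≤ d := by exact_mod_cast hd
  have hd1 : (d : ℝ) - 1 ≠ 0 := by linarith
  have hd2 : 0 < (d : ℝ) ^ 2 - 1 := by nlinarith
  have hJ : choi N.map = ((lam / (d + 1) + (1 - lam) / (d - 1) : ℝ) : ℂ) • 1
      + ((lam / (d + 1) - (1 - lam) / (d - 1) : ℝ) : ℂ) • swapMatrix (Fin d) ℂ := by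
    refine choi_eq_smul_one_add_smul_swapMatrix _ _ _ fun X => ?_
    rw [hN]
    push_cast
    module
  have hb : lam / (d + 1) - (1 - lam) / (d - 1)
      = (2 * d * lam - (1 + d)) / ((d : ℝ) ^ 2 - 1) := by
    field_simp
    ring
  rw [cv_eq_of_choi_eq_smul_one_add_smul_swapMatrix hd N _ _ hJ, hb]
  constructor
  · intro h
    rw [le_div_iff₀ (by positivity)] at h
    rw [max_eq_right (div_nonpos_of_nonpos_of_nonneg (by linarith) hd2.le)]
    field_simp
    ring
  · intro h
    rw [div_lt_iff₀ (by positivity)] at h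
    rw [max_eq_left (div_nonneg (by linarith) hd2.le)]
    field_simp
    ring

/-- The communication value of the Werner-Holevo channel
`W_{d,λ} = λΦ₀ + (1−λ)Φ₁` with `Φ₀(X) = ((Tr X)I + Xᵀ)/(d+1)` and
`Φ₁(X) = ((Tr X)I − Xᵀ)/(d−1)`. -/
theorem cv_werner_holevo (d : ℕ) (hd : 2 ≤ d) (lam : ℝ)
    (hl0 : 0 ≤ lam) (hl1 : lam ≤ 1) (N : Channel (Fin d) (Fin d))
    (hN : ∀ X : Matrix (Fin d) (Fin d) ℂ,
      N.map X = ((lam : ℂ) / ((d : ℂ) + 1)) • (X.trace • (1 : Matrix (Fin d) (Fin d) ℂ) + Xᵀ)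
        + (((1 - lam : ℝ) : ℂ) / ((d : ℂ) - 1)) •
            (X.trace • (1 : Matrix (Fin d) (Fin d) ℂ) - Xᵀ)) :
    (lam ≤ (1 + d) / (2 * d) →
      cv N = d * (d + 1 - 2 * lam) / ((d : ℝ) ^ 2 - 1)) ∧
    ((1 + d) / (2 * d) < lam →
      cv N = 2 * d * lam / (1 + d)) :=
  cv_werner_holevo_general d hd lam N hN
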